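/- arXiv:1503.05499 — 3 statements merged into one kernel-verified Lean document; each statement's English description precedes it below -/
import Mathlib

section
/- For a uniformly random n×m Toeplitz matrix G over F_2 used as the generator matrix of a binary linear code with rate R = n/m, and any δ ∈ (0, 1/2), the probability that the minimum relative distance of the code is at most δ is bounded above by 2^{-m(1 - H₂(δ) - R)}, where H₂ is the binary entropy function. -/
/-!
For a fixed nonzero message `x`, the codeword `x ᵥ* toeplitz n m t` is an `F₂`-linear and
surjective function of the `n + m - 1` free entries `t`, so for uniform `t` it is uniform on
`F₂^m`: it lands in the Hamming ball of radius `δ m` with probability at most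
`2 ^ (m H₂(δ)) / 2 ^ m`, the volume bound being the usual one from the binomial expansion of
`(δ + (1 - δ)) ^ m`. A union bound over the fewer than `2 ^ n` nonzero messages gives
`2 ^ (n + m H₂(δ) - m)`, which is `2 ^ (-m (1 - H₂(δ) - R))` for `R = n / m`.
-/

noncomputable def binEnt (δ : ℝ) : ℝ :=
  -δ * Real.logb 2 δ - (1 - δ) * Real.logb 2 (1 - δ)

/-- The `n × m` Toeplitz matrix over `F₂` determined by its first row and
first column, i.e. by `n + m - 1` entries: `G i j = t (i - j + (m-1))`. -/
def toeplitz (n m : ℕ) (t : Fin (n + m - 1) → ZMod 2) :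
    Matrix (Fin n) (Fin m) (ZMod 2) :=
  fun i j => t ⟨i.val + (m - 1) - j.val, by
    have hi := i.isLt; have hj := j.isLt; omega⟩

open Finset Function Matrix

theorem AddMonoidHom.card_filter_mem_mul_card_eq_of_surjective {G H F : Type*} [AddGroup G]
    [Fintype G] [AddMonoid H] [Fintype H] [DecidableEq H] [FunLike F G H]
    [AddMonoidHomClass F G H] {f : F} (hf : Surjective f) (S : Finset H) :
    #{g | f g ∈ S} * Fintype.card H = #S * Fintype.card G := by
  have hfiber (c : H) : #{g | f g = c} * Fintype.card H = Fintype.card G := by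
    calc #{g | f g = c} * Fintype.card H = ∑ d : H, #{g | f g = d} := by
          rw [sum_congr rfl fun d _ => card_fiber_eq_of_mem_range f (hf d) (hf c), sum_const,
            card_univ, smul_eq_mul, mul_comm]
      _ = Fintype.card G := (card_eq_sum_card_fiberwise fun _ _ => mem_univ _).symm
  have hsplit : #{g | f g ∈ S} = ∑ c ∈ S, #{g ∈ {g | f g ∈ S} | f g = c} :=
    card_eq_sum_card_fiberwise fun g hg => (mem_filter.1 hg).2
  rw [hsplit, sum_mul, ← smul_eq_mul, ← sum_const]
  refine sum_congr rfl fun c hc => ?_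
  rw [filter_filter, ← hfiber c]
  congr 2
  ext g
  simp only [mem_filter, mem_univ, true_and, and_iff_right_iff_imp]
  rintro rfl
  exact hc

theorem card_filter_hammingNorm_le {ι : Type*} [Fintype ι] [DecidableEq ι] (K : ℕ) :
    #{c : ι → ZMod 2 | hammingNorm c ≤ K} ≤ ∑ k ∈ range (K + 1), (Fintype.card ι).choose k := by
  have hsupport_inj : Set.InjOn (fun c : ι → ZMod 2 => ({j | c j ≠ 0} : Finset ι))
      {c | hammingNorm c ≤ K} := by
    intro c _ c' _ h
    have binary : ∀ a b : ZMod 2, (a ≠ 0 ↔ b ≠ 0) → a = b := by decide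
    funext j
    exact binary _ _ (by simpa using congrArg (j ∈ ·) h)
  calc #{c : ι → ZMod 2 | hammingNorm c ≤ K}
      ≤ #((range (K + 1)).biUnion fun k => powersetCard k (univ : Finset ι)) := by
        refine card_le_card_of_injOn _ (fun c hc => ?_) (by simpa using hsupport_inj)
        simp only [coe_filter, Set.mem_ofPred_eq, mem_univ, true_and] at hc
        exact mem_biUnion.2 ⟨hammingNorm c, mem_range.2 (Nat.lt_succ_of_le hc),
          mem_powersetCard.2 ⟨subset_univ _, rfl⟩⟩
    _ ≤ ∑ k ∈ range (K + 1), #(powersetCard k (univ : Finset ι)) := card_biUnion_le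
    _ = ∑ k ∈ range (K + 1), (Fintype.card ι).choose k := by simp [card_powersetCard]

theorem two_rpow_neg_mul_binEnt {δ : ℝ} (h0 : 0 < δ) (h1 : δ < 1) (x : ℝ) :
    (2 : ℝ) ^ (-(x * binEnt δ)) = δ ^ (δ * x) * (1 - δ) ^ ((1 - δ) * x) := by
  have hbase {a : ℝ} (ha : 0 < a) (e : ℝ) : a ^ e = 2 ^ (Real.logb 2 a * e) := by
    rw [Real.rpow_mul zero_le_two, Real.rpow_logb two_pos (by norm_num) ha]
  rw [hbase h0, hbase (sub_pos.2 h1), ← Real.rpow_add two_pos, binEnt]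
  ring_nf

/-- Each of the first `⌊δ m⌋` terms of the binomial expansion of `(δ + (1 - δ)) ^ m = 1` is at
least `2 ^ (-m H₂(δ))`, since `δ ^ k (1 - δ) ^ (m - k)` decreases in `k` when `δ ≤ 1/2`. -/
theorem sum_range_choose_le_two_rpow_mul_binEnt {m K : ℕ} {δ : ℝ} (h0 : 0 < δ) (h2 : δ ≤ 1 / 2)
    (hK : (K : ℝ) ≤ δ * m) :
    ∑ k ∈ range (K + 1), (m.choose k : ℝ) ≤ 2 ^ (m * binEnt δ) := by
  have h1 : 0 < 1 - δ := by linarith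
  have hKm : K ≤ m := by
    have : (K : ℝ) ≤ m := hK.trans (by nlinarith [(m.cast_nonneg : (0 : ℝ) ≤ m)])
    exact_mod_cast this
  have hterm (k : ℕ) (hk : k ∈ range (K + 1)) :
      (2 : ℝ) ^ (-(m * binEnt δ)) ≤ δ ^ k * (1 - δ) ^ (m - k) := by
    have hkK : k ≤ K := Nat.lt_succ_iff.1 (mem_range.1 hk)
    have hsplit (e : ℝ) :
        δ ^ e * (1 - δ) ^ ((m : ℝ) - e) = (1 - δ) ^ (m : ℝ) * (δ / (1 - δ)) ^ e := by
      rw [Real.div_rpow h0.le h1.le, Real.rpow_sub h1]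
      field_simp
    have hcast_sub : ((m - k : ℕ) : ℝ) = (m : ℝ) - k := by
      rw [Nat.cast_sub (by omega)]
    rw [two_rpow_neg_mul_binEnt h0 (by linarith), ← Real.rpow_natCast δ, ← Real.rpow_natCast,
      hcast_sub, hsplit, show (1 - δ) * m = (m : ℝ) - δ * m by ring, hsplit]
    refine mul_le_mul_of_nonneg_left ?_ (by positivity)
    exact Real.rpow_le_rpow_of_exponent_ge (by positivity) ((div_le_one h1).2 (by linarith))
      ((Nat.cast_le.2 hkK).trans hK)
  have hbinomial : ∑ k ∈ range (m + 1), (m.choose k : ℝ) * (δ ^ k * (1 - δ) ^ (m - k)) = 1 := by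
    simpa [add_pow, mul_comm, mul_left_comm] using (add_pow δ (1 - δ) m).symm
  have hprod : (∑ k ∈ range (K + 1), (m.choose k : ℝ)) * 2 ^ (-(m * binEnt δ)) ≤ 1 := by
    calc (∑ k ∈ range (K + 1), (m.choose k : ℝ)) * 2 ^ (-(m * binEnt δ))
        ≤ ∑ k ∈ range (K + 1), (m.choose k : ℝ) * (δ ^ k * (1 - δ) ^ (m - k)) := by
          rw [sum_mul]
          exact sum_le_sum fun k hk => by gcongr; exact hterm k hk
      _ ≤ ∑ k ∈ range (m + 1), (m.choose k : ℝ) * (δ ^ k * (1 - δ) ^ (m - k)) :=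
          sum_le_sum_of_subset_of_nonneg (range_subset_range.2 (by omega)) fun _ _ _ => by
            positivity
      _ = 1 := hbinomial
  rwa [Real.rpow_neg zero_le_two, ← div_eq_mul_inv, div_le_one (by positivity)] at hprod

def toeplitzVecMul (n m : ℕ) (x : Fin n → ZMod 2) :
    (Fin (n + m - 1) → ZMod 2) →ₗ[ZMod 2] (Fin m → ZMod 2) where
  toFun t := x ᵥ* toeplitz n m t
  map_add' t t' := by
    ext j
    simp [vecMul, dotProduct, toeplitz, mul_add, sum_add_distrib]
  map_smul' c t := by
    ext j
    simp [vecMul, dotProduct, toeplitz, mul_sum, mul_left_comm]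

@[simp]
theorem toeplitzVecMul_apply {n m : ℕ} (x : Fin n → ZMod 2) (t : Fin (n + m - 1) → ZMod 2) :
    toeplitzVecMul n m x t = x ᵥ* toeplitz n m t :=
  rfl

theorem toeplitzVecMul_apply_rev {n m : ℕ} (x : Fin n → ZMod 2) (t : Fin (n + m - 1) → ZMod 2)
    (u : Fin m) :
    toeplitzVecMul n m x t u.rev = ∑ i, x i * t ⟨(i : ℕ) + u, by omega⟩ := by
  simp only [toeplitzVecMul_apply, vecMul, dotProduct, toeplitz, Fin.val_rev]
  refine sum_congr rfl fun i _ => ?_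
  congr 3
  omega

/-- Placing `s` in the window `i₀, …, i₀ + m - 1` of `t`, where `i₀` is the top nonzero coefficient
of `x`, makes `t ↦ x ᵥ* toeplitz n m t` triangular with diagonal `x i₀`. -/
theorem toeplitzVecMul_surjective {n m : ℕ} {x : Fin n → ZMod 2} (hx : x ≠ 0) :
    Surjective (toeplitzVecMul n m x) := by
  obtain ⟨i₀, hi₀, hi₀_max⟩ := exists_max_image {i | x i ≠ 0} id
    (by simpa [filter_nonempty_iff, funext_iff] using hx)
  simp only [mem_filter, mem_univ, true_and, id] at hi₀ hi₀_max
  let window : Fin m → Fin (n + m - 1) := fun u => ⟨i₀ + u, by omega⟩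
  have hwindow : Injective window := fun u v h => by
    simpa [window, Fin.ext_iff] using h
  let Φ := toeplitzVecMul n m x ∘ₗ ExtendByZero.linearMap (ZMod 2) window
  suffices Injective Φ from
    Surjective.of_comp (g := ExtendByZero.linearMap (ZMod 2) window)
      (Finite.injective_iff_surjective.1 this)
  refine (injective_iff_map_eq_zero Φ).2 fun s hs => ?_
  by_contra hs_ne
  obtain ⟨u₀, hu₀, hu₀_min⟩ := exists_min_image {u | s u ≠ 0} id
    (by simpa [filter_nonempty_iff, funext_iff] using hs_ne)
  simp only [mem_filter, mem_univ, true_and, id] at hu₀ hu₀_min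
  have hlower (i : Fin n) (hi : i ≠ i₀) :
      x i * extend window s 0 ⟨i + u₀, by omega⟩ = 0 := by
    by_cases hxi : x i = 0
    · rw [hxi, zero_mul]
    have hlt : i < i₀ := lt_of_le_of_ne (hi₀_max i hxi) hi
    by_cases hmem : ∃ u, window u = ⟨i + u₀, by omega⟩
    · obtain ⟨u, hu⟩ := hmem
      have hsu : s u = 0 := by
        by_contra hsu
        have := hu₀_min u hsu
        simp only [window, Fin.ext_iff] at hu
        omega
      rw [← hu, hwindow.extend_apply, hsu, mul_zero]
    · rw [extend_apply' _ _ _ hmem, Pi.zero_apply, mul_zero]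
  have hdiag : Φ s u₀.rev = x i₀ * s u₀ := by
    simp only [Φ, LinearMap.comp_apply, ExtendByZero.linearMap_apply, toeplitzVecMul_apply_rev]
    rw [sum_eq_single i₀ (fun i _ => hlower i) (by simp), ← hwindow.extend_apply s 0 u₀]
  exact mul_ne_zero hi₀ hu₀ (hdiag ▸ congrFun hs u₀.rev)

theorem card_exists_vecMul_toeplitz_mem_mul_le (n m : ℕ) (S : Finset (Fin m → ZMod 2)) :
    #{t : Fin (n + m - 1) → ZMod 2 | ∃ x ≠ 0, x ᵥ* toeplitz n m t ∈ S} * 2 ^ m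
      ≤ 2 ^ n * #S * 2 ^ (n + m - 1) := by
  have hunion : ({t | ∃ x ≠ 0, x ᵥ* toeplitz n m t ∈ S} : Finset (Fin (n + m - 1) → ZMod 2))
      = ({x | x ≠ 0} : Finset (Fin n → ZMod 2)).biUnion fun x => {t | x ᵥ* toeplitz n m t ∈ S} := by
    ext t
    simp
  calc #{t : Fin (n + m - 1) → ZMod 2 | ∃ x ≠ 0, x ᵥ* toeplitz n m t ∈ S} * 2 ^ m
      ≤ (∑ x ∈ ({x | x ≠ 0} : Finset (Fin n → ZMod 2)),
          #{t : Fin (n + m - 1) → ZMod 2 | x ᵥ* toeplitz n m t ∈ S}) * 2 ^ m := by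
        rw [hunion]
        gcongr
        exact card_biUnion_le
    _ = ∑ x ∈ ({x | x ≠ 0} : Finset (Fin n → ZMod 2)), #S * 2 ^ (n + m - 1) := by
        rw [sum_mul]
        refine sum_congr rfl fun x hx => ?_
        convert AddMonoidHom.card_filter_mem_mul_card_eq_of_surjective
          (toeplitzVecMul_surjective (m := m) (mem_filter.1 hx).2) S <;> simp
    _ ≤ 2 ^ n * #S * 2 ^ (n + m - 1) := by
        rw [sum_const, smul_eq_mul, mul_assoc]
        gcongr
        simpa using card_filter_le (univ : Finset (Fin n → ZMod 2)) (· ≠ 0)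

/-- Toeplitz Gilbert–Varshamov bound: for a uniformly random `n × m` Toeplitz
matrix `G` over `F₂` (rate `R = n/m`, `n < m`) and `δ ∈ (0, 1/2)`, the
probability that the code `{xG}` has minimum relative distance at most `δ`
(i.e. some nonzero input has codeword of Hamming weight `≤ δ m`) is at most
`2^{-m (1 - H₂(δ) - R)}`. -/
theorem toeplitz_GV_bound (n m : ℕ) (hnm : n < m) (δ R : ℝ)
    (hδ : δ ∈ Set.Ioo (0 : ℝ) (1 / 2)) (hR : R = (n : ℝ) / m) :
    (Nat.card {t : Fin (n + m - 1) → ZMod 2 //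
        ∃ x : Fin n → ZMod 2, x ≠ 0 ∧
          ((hammingNorm (Matrix.vecMul x (toeplitz n m t)) : ℝ) ≤ δ * m)} : ℝ)
      / 2 ^ (n + m - 1)
      ≤ 2 ^ (-(m : ℝ) * (1 - binEnt δ - R)) := by
  obtain ⟨hδ0, hδ2⟩ := hδ
  have hδm : 0 ≤ δ * m := by positivity
  let ball : Finset (Fin m → ZMod 2) := {c | hammingNorm c ≤ ⌊δ * m⌋₊}
  have hbad : Nat.card {t : Fin (n + m - 1) → ZMod 2 // ∃ x : Fin n → ZMod 2, x ≠ 0 ∧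
        ((hammingNorm (x ᵥ* toeplitz n m t)) : ℝ) ≤ δ * m}
      = #{t : Fin (n + m - 1) → ZMod 2 | ∃ x ≠ 0, x ᵥ* toeplitz n m t ∈ ball} := by
    rw [Nat.card_eq_fintype_card, Fintype.card_subtype]
    simp [ball, Nat.le_floor_iff hδm]
  have hcount := card_exists_vecMul_toeplitz_mem_mul_le n m ball
  have hball : (#ball : ℝ) ≤ 2 ^ (m * binEnt δ) := by
    have hvolume := card_filter_hammingNorm_le (ι := Fin m) ⌊δ * m⌋₊
    rw [Fintype.card_fin] at hvolume
    exact (Nat.cast_le.2 hvolume).trans <| by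
      exact_mod_cast sum_range_choose_le_two_rpow_mul_binEnt hδ0 hδ2.le (Nat.floor_le hδm)
  have hexp : -(m : ℝ) * (1 - binEnt δ - R) = n + m * binEnt δ - m := by
    have hm : (m : ℝ) ≠ 0 := Nat.cast_ne_zero.2 (by omega)
    rw [hR]
    field_simp
    ring
  calc _ ≤ (2 ^ n * #ball / 2 ^ m : ℝ) := by
        rw [hbad, div_le_div_iff₀ (by positivity) (by positivity)]
        exact_mod_cast hcount
    _ ≤ 2 ^ n * 2 ^ (m * binEnt δ) / 2 ^ m := by gcongr
    _ = 2 ^ (-(m : ℝ) * (1 - binEnt δ - R)) := by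
        rw [hexp, Real.rpow_sub two_pos, Real.rpow_add two_pos, Real.rpow_natCast,
          Real.rpow_natCast]
end

section
/- If the rate satisfies R = 1 - H₂(δ) - ε for some ε > 0, then for a uniformly random n×m Toeplitz matrix over F_2, the probability that the associated linear code has minimum relative distance at most δ is at most 2^{-εm}. -/
open Finset
open scoped Matrix

theorem exists_ne_zero_forall_gt_eq_zero {ι M : Type*} [LinearOrder ι] [Fintype ι] [Zero M]
    {x : ι → M} (hx : x ≠ 0) : ∃ i₀, x i₀ ≠ 0 ∧ ∀ i, i₀ < i → x i = 0 := by
  classical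
  obtain ⟨i, hi⟩ := Function.ne_iff.mp hx
  obtain ⟨i₀, hi₀, hmax⟩ := (univ.filter (x · ≠ 0)).exists_max_image id ⟨i, by simpa using hi⟩
  refine ⟨i₀, by simpa using hi₀, fun j hj => ?_⟩
  by_contra hj'
  exact (hmax j (by simpa using hj')).not_gt hj

theorem Fin.card_subtype_le_and_lt_add {N : ℕ} (a m : ℕ) (h : a + m ≤ N) :
    Fintype.card {k : Fin N // a ≤ k ∧ (k : ℕ) < a + m} = m := by
  refine (Fintype.card_congr ?_).trans (Fintype.card_fin m)
  exact
    { toFun := fun k => ⟨k - a, by omega⟩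
      invFun := fun j => ⟨⟨a + j, by omega⟩, by simp⟩
      left_inv := fun k => by ext; simp; omega
      right_inv := fun j => by ext; simp }

theorem card_filter_hammingNorm_le_sum_choose {ι : Type*} [Fintype ι] [DecidableEq ι]
    (P : ℕ → Prop) [DecidablePred P] :
    #{y : ι → ZMod 2 | P (hammingNorm y)} ≤
      ∑ k ∈ (range (Fintype.card ι + 1)).filter P, (Fintype.card ι).choose k := by
  have hbit : ∀ a b : ZMod 2, (a ≠ 0 ↔ b ≠ 0) → a = b := by decide
  have hsupp : Function.Injective fun y : ι → ZMod 2 => univ.filter (y · ≠ 0) := fun y y' h =>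
    funext fun i => hbit _ _ (by simpa using Finset.ext_iff.mp h i)
  calc #{y : ι → ZMod 2 | P (hammingNorm y)}
      ≤ #(((range (Fintype.card ι + 1)).filter P).biUnion fun k => powersetCard k univ) := by
        refine card_le_card_of_injOn _ (fun y hy => ?_) hsupp.injOn
        simp only [coe_filter, mem_univ, true_and, Set.mem_ofPred_eq] at hy
        simp only [coe_biUnion, coe_filter, mem_range, mem_coe, mem_powersetCard, Set.mem_iUnion,
          Set.mem_ofPred_eq, exists_prop]
        exact ⟨hammingNorm y, ⟨Nat.lt_succ_of_le (card_le_univ _), hy⟩, subset_univ _, rfl⟩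
    _ ≤ _ := card_biUnion_le
    _ = _ := by simp only [card_powersetCard, card_univ]

theorem two_rpow_neg_binEnt_mul {δ : ℝ} (h0 : 0 < δ) (h1 : δ < 1) (a : ℝ) :
    (2 : ℝ) ^ (-(binEnt δ * a)) = δ ^ (δ * a) * (1 - δ) ^ ((1 - δ) * a) := by
  have hlog {p : ℝ} (hp : 0 < p) (c : ℝ) : p ^ c = 2 ^ (Real.logb 2 p * c) := by
    rw [Real.rpow_mul zero_le_two, Real.rpow_logb zero_lt_two one_lt_two.ne' hp]
  rw [hlog h0, hlog (sub_pos.mpr h1), ← Real.rpow_add zero_lt_two, binEnt]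
  ring_nf

theorem antitone_rpow_mul_rpow_sub {p q : ℝ} (hp : 0 < p) (hpq : p ≤ q) (M : ℝ) :
    Antitone fun a : ℝ => p ^ a * q ^ (M - a) := by
  intro a b hab
  have hq : 0 < q := hp.trans_le hpq
  have hpow : p ^ (b - a) ≤ q ^ (b - a) := Real.rpow_le_rpow hp.le hpq (sub_nonneg.mpr hab)
  calc p ^ b * q ^ (M - b) = p ^ a * (p ^ (b - a) * q ^ (M - b)) := by
        rw [← mul_assoc, ← Real.rpow_add hp, add_sub_cancel]
    _ ≤ p ^ a * (q ^ (b - a) * q ^ (M - b)) := by gcongr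
    _ = p ^ a * q ^ (M - a) := by rw [← Real.rpow_add hq]; ring_nf

theorem sum_choose_le_two_rpow_binEnt {δ : ℝ} (h0 : 0 < δ) (h1 : δ ≤ 1 / 2) (m : ℕ) :
    ∑ k ∈ (range (m + 1)).filter (fun k : ℕ => (k : ℝ) ≤ δ * m), (m.choose k : ℝ) ≤
      2 ^ (binEnt δ * m) := by
  set s := (range (m + 1)).filter (fun k : ℕ => (k : ℝ) ≤ δ * m)
  have hA : (2 : ℝ) ^ (-(binEnt δ * m)) = δ ^ (δ * m) * (1 - δ) ^ (m - δ * m) := by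
    rw [two_rpow_neg_binEnt_mul h0 (by linarith), sub_mul, one_mul]
  have hterm : ∀ k ∈ s, (2 : ℝ) ^ (-(binEnt δ * m)) ≤ δ ^ k * (1 - δ) ^ (m - k) := by
    intro k hk
    simp only [s, mem_filter, mem_range] at hk
    rw [hA, ← Real.rpow_natCast, ← Real.rpow_natCast, Nat.cast_sub (by omega)]
    exact antitone_rpow_mul_rpow_sub h0 (by linarith) m hk.2
  have hsum : (∑ k ∈ s, (m.choose k : ℝ)) * 2 ^ (-(binEnt δ * m)) ≤ 1 := calc
    _ = ∑ k ∈ s, m.choose k * (2 : ℝ) ^ (-(binEnt δ * m)) := sum_mul ..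
    _ ≤ ∑ k ∈ s, m.choose k * (δ ^ k * (1 - δ) ^ (m - k)) :=
        sum_le_sum fun k hk => by gcongr; exact hterm k hk
    _ ≤ ∑ k ∈ range (m + 1), δ ^ k * (1 - δ) ^ (m - k) * m.choose k := by
        simp only [mul_comm (m.choose _ : ℝ)]
        refine sum_le_sum_of_subset_of_nonneg (filter_subset _ _) fun k _ _ => ?_
        have : 0 ≤ 1 - δ := by linarith
        positivity
    _ = 1 := by rw [← add_pow, add_sub_cancel, one_pow]
  rwa [← le_div_iff₀ (by positivity), one_div, ← Real.rpow_neg zero_le_two, neg_neg] at hsum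

theorem card_hammingBall_le_two_rpow_binEnt {δ : ℝ} (h0 : 0 < δ) (h1 : δ ≤ 1 / 2) (m : ℕ) :
    (#{y : Fin m → ZMod 2 | (hammingNorm y : ℝ) ≤ δ * m} : ℝ) ≤ 2 ^ (binEnt δ * m) := by
  refine le_trans ?_ (sum_choose_le_two_rpow_binEnt h0 h1 m)
  exact_mod_cast Fintype.card_fin m ▸
    card_filter_hammingNorm_le_sum_choose (ι := Fin m) fun k => (k : ℝ) ≤ δ * m

theorem toeplitz_sub (n m : ℕ) (t t' : Fin (n + m - 1) → ZMod 2) :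
    toeplitz n m (t - t') = toeplitz n m t - toeplitz n m t' := rfl

theorem eq_zero_of_vecMul_toeplitz_eq_zero {n m : ℕ} {x : Fin n → ZMod 2} {i₀ : Fin n}
    (hx : x i₀ ≠ 0) (htop : ∀ i, i₀ < i → x i = 0) {t : Fin (n + m - 1) → ZMod 2}
    (ht : x ᵥ* toeplitz n m t = 0)
    (hout : ∀ k : Fin (n + m - 1), ¬((i₀ : ℕ) ≤ k ∧ (k : ℕ) < i₀ + m) → t k = 0) :
    t = 0 := by
  funext k
  induction k using WellFoundedLT.induction with
  | _ k IH =>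
  by_cases hk : (i₀ : ℕ) ≤ k ∧ (k : ℕ) < i₀ + m
  swap
  · exact hout k hk
  have hcol := congrFun ht ⟨i₀ + m - 1 - k, by omega⟩
  rw [Matrix.vecMul, dotProduct, sum_eq_single i₀] at hcol
  · have hidx : (⟨i₀ + (m - 1) - (i₀ + m - 1 - k), by omega⟩ : Fin (n + m - 1)) = k := by
      ext; simp only; omega
    simpa [toeplitz, hidx, hx] using hcol
  · intro i _ hi
    rcases lt_or_gt_of_ne hi with hlt | hgt
    · exact mul_eq_zero_of_right _ (IH _ (Fin.mk_lt_of_lt_val (by simp; omega)))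
    · rw [htop i hgt, zero_mul]
  · simp

theorem card_filter_vecMul_toeplitz_mem_mul_le {n m : ℕ} {x : Fin n → ZMod 2} (hx : x ≠ 0)
    (B : Finset (Fin m → ZMod 2)) :
    #{t | x ᵥ* toeplitz n m t ∈ B} * 2 ^ m ≤ #B * 2 ^ (n + m - 1) := by
  classical
  obtain ⟨i₀, hi₀, htop⟩ := exists_ne_zero_forall_gt_eq_zero hx
  set W : Fin (n + m - 1) → Prop := fun k => (i₀ : ℕ) ≤ k ∧ (k : ℕ) < i₀ + m
  let φ (t : Fin (n + m - 1) → ZMod 2) : (Fin m → ZMod 2) × ({k // ¬W k} → ZMod 2) :=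
    (x ᵥ* toeplitz n m t, fun k => t k)
  have hφ : Function.Injective φ := fun t t' h => by
    simp only [φ, Prod.mk.injEq, funext_iff, Subtype.forall] at h
    refine sub_eq_zero.mp (eq_zero_of_vecMul_toeplitz_eq_zero hi₀ htop ?_ fun k hk => ?_)
    · rw [toeplitz_sub, Matrix.vecMul_sub, funext h.1, sub_self]
    · rw [Pi.sub_apply, h.2 k hk, sub_self]
  have hfilter : #{t | x ᵥ* toeplitz n m t ∈ B} ≤ #B * Fintype.card ({k // ¬W k} → ZMod 2) := by
    rw [← card_univ, ← card_product]
    exact card_le_card_of_injOn φ (fun t ht => by simpa [φ] using ht) hφ.injOn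
  have hsplit : Fintype.card ({k // ¬W k} → ZMod 2) * 2 ^ m = 2 ^ (n + m - 1) := by
    have := Fintype.card_congr (Equiv.piEquivPiSubtypeProd W fun _ => ZMod 2)
    have hW : Fintype.card {k // W k} = m := Fin.card_subtype_le_and_lt_add i₀ m (by omega)
    simp only [Fintype.card_prod, Fintype.card_pi, prod_const, ZMod.card, card_univ,
      Fintype.card_fin, hW] at this
    rw [Fintype.card_fun, ZMod.card, this, mul_comm]
  calc #{t | x ᵥ* toeplitz n m t ∈ B} * 2 ^ m
      ≤ #B * Fintype.card ({k // ¬W k} → ZMod 2) * 2 ^ m := Nat.mul_le_mul_right _ hfilter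
    _ = #B * 2 ^ (n + m - 1) := by rw [mul_assoc, hsplit]

theorem card_exists_vecMul_toeplitz_mul_le (n m : ℕ) (P : (Fin m → ZMod 2) → Prop)
    [DecidablePred P] :
    #{t | ∃ x : Fin n → ZMod 2, x ≠ 0 ∧ P (x ᵥ* toeplitz n m t)} * 2 ^ m ≤
      2 ^ n * #{y | P y} * 2 ^ (n + m - 1) := by
  classical
  have hunion : #{t | ∃ x : Fin n → ZMod 2, x ≠ 0 ∧ P (x ᵥ* toeplitz n m t)} ≤
      ∑ x ∈ univ.filter (· ≠ 0), #{t | x ᵥ* toeplitz n m t ∈ univ.filter P} := by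
    refine (card_le_card fun t ht => ?_).trans card_biUnion_le
    obtain ⟨x, hx, hP⟩ := (mem_filter.mp ht).2
    exact mem_biUnion.mpr ⟨x, by simpa using hx, by simpa using hP⟩
  calc _ ≤ ∑ x ∈ univ.filter (· ≠ 0), #{t | x ᵥ* toeplitz n m t ∈ univ.filter P} * 2 ^ m := by
        rw [← sum_mul]; exact Nat.mul_le_mul_right _ hunion
    _ ≤ ∑ _x ∈ univ.filter (· ≠ (0 : Fin n → ZMod 2)), #{y | P y} * 2 ^ (n + m - 1) :=
        sum_le_sum fun x hx => card_filter_vecMul_toeplitz_mem_mul_le (mem_filter.mp hx).2 _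
    _ ≤ 2 ^ n * #{y | P y} * 2 ^ (n + m - 1) := by
        rw [sum_const, smul_eq_mul, ← mul_assoc]
        gcongr
        simpa using card_filter_le univ (· ≠ (0 : Fin n → ZMod 2))

theorem toeplitz_GV_rate_bound_general (n m : ℕ) (hnm : n < m) (δ R ε : ℝ)
    (hδ : δ ∈ Set.Ioo (0 : ℝ) (1 / 2)) (hR : R = (n : ℝ) / m)
    (hrate : R = 1 - binEnt δ - ε) :
    (Nat.card {t : Fin (n + m - 1) → ZMod 2 //
        ∃ x : Fin n → ZMod 2, x ≠ 0 ∧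
          ((hammingNorm (Matrix.vecMul x (toeplitz n m t)) : ℝ) ≤ δ * m)} : ℝ)
      / 2 ^ (n + m - 1)
      ≤ 2 ^ (-ε * m) := by
  have hm : (0 : ℝ) < m := by exact_mod_cast (n.zero_le.trans_lt hnm)
  have hn : (n : ℝ) = (1 - binEnt δ - ε) * m := by rw [← hrate, hR, div_mul_cancel₀ _ hm.ne']
  have hcount := card_exists_vecMul_toeplitz_mul_le n m fun y => (hammingNorm y : ℝ) ≤ δ * m
  have hball := card_hammingBall_le_two_rpow_binEnt hδ.1 hδ.2.le m
  have hexp : (2 : ℝ) ^ n * 2 ^ (binEnt δ * m) / 2 ^ m = 2 ^ (-ε * m) := by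
    rw [← Real.rpow_natCast, ← Real.rpow_natCast 2 m, ← Real.rpow_add two_pos,
      ← Real.rpow_sub two_pos, hn]
    ring_nf
  rw [Nat.card_eq_fintype_card, Fintype.card_subtype, div_le_iff₀ (by positivity), ← hexp]
  calc (_ : ℝ) ≤ 2 ^ n * #{y : Fin m → ZMod 2 | (hammingNorm y : ℝ) ≤ δ * m} * 2 ^ (n + m - 1)
        / 2 ^ m := by
        rw [le_div_iff₀ (by positivity)]; exact_mod_cast hcount
    _ ≤ 2 ^ n * 2 ^ (binEnt δ * m) / 2 ^ m * 2 ^ (n + m - 1) := by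
        rw [mul_div_right_comm]; gcongr

/-- If the rate satisfies `R = n/m = 1 - H₂(δ) - ε` for some `ε > 0`, then for a
uniformly random `n × m` Toeplitz matrix over `F₂` the probability that the
associated linear code has minimum relative distance at most `δ` is at most
`2^{-ε m}`. -/
theorem toeplitz_GV_rate_bound (n m : ℕ) (hnm : n < m) (δ R ε : ℝ)
    (hδ : δ ∈ Set.Ioo (0 : ℝ) (1 / 2)) (hR : R = (n : ℝ) / m)
    (hε : 0 < ε) (hrate : R = 1 - binEnt δ - ε) :
    (Nat.card {t : Fin (n + m - 1) → ZMod 2 //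
        ∃ x : Fin n → ZMod 2, x ≠ 0 ∧
          ((hammingNorm (Matrix.vecMul x (toeplitz n m t)) : ℝ) ≤ δ * m)} : ℝ)
      / 2 ^ (n + m - 1)
      ≤ 2 ^ (-ε * m) :=
  toeplitz_GV_rate_bound_general n m hnm δ R ε hδ hR hrate
end

section
/- For a uniformly random n×m Toeplitz matrix G over F_2 and any fixed nonzero vector x ∈ F_2^n, the vector xG is uniformly distributed on F_2^m. -/
/-- Auxiliary triangular back-substitution: solves for the values of the
Toeplitz parameter vector on the "support" window, recursively in `j`. -/
def solveAux (m : ℕ) {n : ℕ} (x : Fin n → ZMod 2) (y : Fin m → ZMod 2)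
    (d : ℕ) : ℕ → ZMod 2
  | j => (if hj : j < m then y ⟨j, hj⟩ else 0) -
      ∑ i : Fin n, if _h : i.val < d ∧ j + d < m + i.val then
        x i * solveAux m x y d (j + (d - i.val)) else 0
  termination_by j => m - j
  decreasing_by omega

/-- An explicit preimage of `y` under `t ↦ x ⬝ᵥ toeplitz n m t`, supported on
the window `[d, d + m)` where `d` is the largest index with `x d ≠ 0`. -/
def solveT (n m : ℕ) (x : Fin n → ZMod 2) (y : Fin m → ZMod 2) (d : ℕ) :
    Fin (n + m - 1) → ZMod 2 :=
  fun k => if d ≤ k.val ∧ k.val < d + m then solveAux m x y d (d + m - 1 - k.val) else 0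

lemma solve_spec (n m : ℕ) (hm : 0 < m) (x : Fin n → ZMod 2) (i0 : Fin n)
    (h1 : x i0 = 1) (hmax : ∀ i : Fin n, i0.val < i.val → x i = 0)
    (y : Fin m → ZMod 2) :
    Matrix.vecMul x (toeplitz n m (solveT n m x y i0.val)) = y := by
  funext j
  have hj := j.isLt
  have key : ∀ i : Fin n,
      x i * (toeplitz n m (solveT n m x y i0.val)) i j
        = (if i = i0 then solveAux m x y i0.val j.val else 0)
          + (if _h : i.val < i0.val ∧ j.val + i0.val < m + i.val then
              x i * solveAux m x y i0.val (j.val + (i0.val - i.val)) else 0) := by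
    intro i
    have hi := i.isLt
    simp only [toeplitz, solveT]
    rcases lt_trichotomy i.val i0.val with hlt | heq | hgt
    · rw [if_neg (show ¬ i = i0 from fun h => by rw [h] at hlt; omega), zero_add]
      by_cases hc : j.val + i0.val < m + i.val
      · rw [dif_pos ⟨hlt, hc⟩, if_pos (show i0.val ≤ i.val + (m-1) - j.val ∧
            i.val + (m-1) - j.val < i0.val + m by omega)]
        congr 2
        omega
      · rw [dif_neg (by omega), if_neg (by omega), mul_zero]
    · have hii : i = i0 := Fin.ext heq
      rw [if_pos hii, dif_neg (by omega), add_zero, hii, h1, one_mul,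
        if_pos (show i0.val ≤ i0.val + (m-1) - j.val ∧
            i0.val + (m-1) - j.val < i0.val + m by omega)]
      congr 1
      omega
    · rw [hmax i hgt, zero_mul, if_neg (fun h => by rw [h] at hgt; omega),
        dif_neg (by omega), add_zero]
  have hvm : Matrix.vecMul x (toeplitz n m (solveT n m x y i0.val)) j
      = ∑ i : Fin n, x i * (toeplitz n m (solveT n m x y i0.val)) i j := by
    simp [Matrix.vecMul, dotProduct]
  rw [hvm, Finset.sum_congr rfl (fun i _ => key i), Finset.sum_add_distrib,
    Finset.sum_ite_eq' Finset.univ i0, if_pos (Finset.mem_univ _)]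
  conv_lhs => rw [solveAux]
  rw [dif_pos hj]
  simp

/-- For a uniformly random `n × m` Toeplitz matrix `G` over `F₂` and any fixed
nonzero `x ∈ F₂^n`, the vector `xG` is uniformly distributed on `F₂^m`: every
fiber of the map `t ↦ x · (toeplitz t)` has exactly `2^{n-1}` elements, i.e.
a `2^m`-th fraction of the `2^{n+m-1}` Toeplitz matrices. -/
theorem toeplitz_vecMul_uniform (n m : ℕ) (hm : 0 < m)
    (x : Fin n → ZMod 2) (hx : x ≠ 0) :
    ∀ y : Fin m → ZMod 2,
      Nat.card {t : Fin (n + m - 1) → ZMod 2 //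
        Matrix.vecMul x (toeplitz n m t) = y} = 2 ^ (n - 1) := by
  -- find the largest index `i0` with `x i0 ≠ 0`
  have hone : ∀ a : ZMod 2, a ≠ 0 → a = 1 := by decide
  have hS : (Finset.univ.filter (fun i : Fin n => x i ≠ 0)).Nonempty := by
    obtain ⟨i, hi⟩ := Function.ne_iff.mp hx
    exact ⟨i, by simpa using hi⟩
  set S := Finset.univ.filter (fun i : Fin n => x i ≠ 0) with hSdef
  set i0 : Fin n := S.max' hS with hi0def
  have hx1 : x i0 = 1 := hone _ (Finset.mem_filter.mp (S.max'_mem hS)).2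
  have hmax : ∀ i : Fin n, i0.val < i.val → x i = 0 := by
    intro i hi
    by_contra hne
    have hmem : i ∈ S := by rw [hSdef, Finset.mem_filter]; exact ⟨Finset.mem_univ _, hne⟩
    have := S.le_max' i hmem
    rw [← hi0def] at this
    exact absurd hi (by omega)
  set s : (Fin m → ZMod 2) → (Fin (n+m-1) → ZMod 2) :=
    fun z => solveT n m x z i0.val with hsdef
  have hs : ∀ z, Matrix.vecMul x (toeplitz n m (s z)) = z :=
    fun z => solve_spec n m hm x i0 hx1 hmax z
  intro y
  have hadd : ∀ a b : Fin (n+m-1) → ZMod 2,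
      Matrix.vecMul x (toeplitz n m (a + b))
        = Matrix.vecMul x (toeplitz n m a) + Matrix.vecMul x (toeplitz n m b) := by
    intro a b
    funext j
    simp [Matrix.vecMul, dotProduct, toeplitz, mul_add, Finset.sum_add_distrib]
  have hsub : ∀ a b : Fin (n+m-1) → ZMod 2,
      Matrix.vecMul x (toeplitz n m (a - b))
        = Matrix.vecMul x (toeplitz n m a) - Matrix.vecMul x (toeplitz n m b) := by
    intro a b
    funext j
    simp [Matrix.vecMul, dotProduct, toeplitz, mul_sub, Finset.sum_sub_distrib]
  have e1 : {t : Fin (n + m - 1) → ZMod 2 // Matrix.vecMul x (toeplitz n m t) = y}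
      ≃ {t : Fin (n + m - 1) → ZMod 2 // Matrix.vecMul x (toeplitz n m t) = 0} :=
    { toFun := fun p => ⟨p.1 - s y, by rw [hsub, p.2, hs, sub_self]⟩
      invFun := fun p => ⟨p.1 + s y, by rw [hadd, p.2, hs, zero_add]⟩
      left_inv := fun p => by ext1; simp
      right_inv := fun p => by ext1; simp }
  have e2 : (Fin (n + m - 1) → ZMod 2)
      ≃ {t : Fin (n + m - 1) → ZMod 2 // Matrix.vecMul x (toeplitz n m t) = 0}
        × (Fin m → ZMod 2) :=
    { toFun := fun t => (⟨t - s (Matrix.vecMul x (toeplitz n m t)), by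
        rw [hsub, hs, sub_self]⟩, Matrix.vecMul x (toeplitz n m t))
      invFun := fun p => p.1.1 + s p.2
      left_inv := fun t => by simp
      right_inv := fun p => by
        have hp : Matrix.vecMul x (toeplitz n m (p.1.1 + s p.2)) = p.2 := by
          rw [hadd, p.1.2, hs, zero_add]
        ext1
        · ext1; simp [hp]
        · simpa using hp }
  have hn : 0 < n := by
    rcases Nat.eq_zero_or_pos n with h | h
    · exfalso; apply hx; subst h; exact Subsingleton.elim x 0
    · exact h
  have hcard := Nat.card_congr e2
  simp only [Nat.card_prod, Nat.card_eq_fintype_card, Fintype.card_prod, Fintype.card_fun,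
    Fintype.card_fin, ZMod.card] at hcard
  rw [Nat.card_congr e1]
  rw [Nat.card_eq_fintype_card]
  have hpow : (2:ℕ) ^ (n + m - 1) = 2 ^ (n - 1) * 2 ^ m := by
    rw [← pow_add]; congr 1; omega
  have := hcard.symm.trans hpow
  exact Nat.eq_of_mul_eq_mul_right (by positivity) this
end
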